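/- Let M ∈ {0,1}^{n×n} be an attention mask and P a permutation matrix with P M Pᵀ = M. Define masked attention f(E) = softmax_rows(M ⊙ (E W_Q)(E W_K)ᵀ + log(M)) (E W_V), where log(M) sets disallowed entries to -∞ (interpreted as: the softmax over each row is taken only over entries j with M_{ij} = 1). Then f(P E) = P f(E). -/

import Mathlib

open Matrix

/-- Row-wise softmax restricted, in row `i`, to the index set `S_i = {j | M i j = 1}`;
entries outside `S_i` receive weight `0` (this realizes adding `log M`, i.e. `-∞`
on disallowed entries). -/
noncomputable def maskedSoftmaxRows {n : ℕ} (M A : Matrix (Fin n) (Fin n) ℝ) :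
    Matrix (Fin n) (Fin n) ℝ :=
  fun i j =>
    if M i j = 1 then
      Real.exp (A i j) / ∑ k ∈ Finset.univ.filter (fun k => M i k = 1), Real.exp (A i k)
    else 0

/-- Masked self-attention
`f(E) = softmax_rows(M ⊙ (E W_Q)(E W_K)ᵀ + log M) (E W_V)`, where the softmax in
row `i` ranges only over `{j | M i j = 1}`. -/
noncomputable def maskedAttention {n d : ℕ} (M : Matrix (Fin n) (Fin n) ℝ)
    (WQ WK WV : Matrix (Fin d) (Fin d) ℝ) (E : Matrix (Fin n) (Fin d) ℝ) :
    Matrix (Fin n) (Fin d) ℝ :=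
  maskedSoftmaxRows M (fun i j => M i j * ((E * WQ) * (E * WK)ᵀ) i j) * (E * WV)

/-!
Relabelling the tokens by `σ` relabels queries, keys and values by rows and the scores by rows
and columns; the masked softmax commutes with relabelling mask and scores simultaneously, since
its normaliser is a sum reindexed by `σ`. So `f_{σ·M}(σ·E) = σ·f_M(E)`, and `P M Pᵀ = M` says
exactly that `σ·M = M`.
-/

theorem Matrix.permMatrix_mul_mul_transpose {n R : Type*} [Fintype n] [DecidableEq n]
    [NonAssocSemiring R] (σ : Equiv.Perm n) (M : Matrix n n R) :
    σ.permMatrix R * M * (σ.permMatrix R)ᵀ = M.submatrix σ σ := by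
  rw [transpose_permMatrix, PEquiv.toMatrix_toPEquiv_mul, PEquiv.mul_toMatrix_toPEquiv,
    submatrix_submatrix]
  rfl

theorem maskedSoftmaxRows_submatrix {n : ℕ} (σ : Equiv.Perm (Fin n))
    (M A : Matrix (Fin n) (Fin n) ℝ) :
    maskedSoftmaxRows (M.submatrix σ σ) (A.submatrix σ σ) =
      (maskedSoftmaxRows M A).submatrix σ σ := by
  ext i j
  have hnormalizer : ∑ k ∈ Finset.univ.filter (fun k => M.submatrix σ σ i k = 1),
      Real.exp (A.submatrix σ σ i k) =
        ∑ k ∈ Finset.univ.filter (fun k => M (σ i) k = 1), Real.exp (A (σ i) k) := by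
    rw [Finset.sum_filter, Finset.sum_filter]
    exact Fintype.sum_equiv σ _ _ fun k => rfl
  unfold maskedSoftmaxRows
  rw [hnormalizer]
  rfl

theorem maskedAttention_submatrix {n d : ℕ} (σ : Equiv.Perm (Fin n))
    (M : Matrix (Fin n) (Fin n) ℝ) (WQ WK WV : Matrix (Fin d) (Fin d) ℝ)
    (E : Matrix (Fin n) (Fin d) ℝ) :
    maskedAttention (M.submatrix σ σ) WQ WK WV (E.submatrix σ id) =
      (maskedAttention M WQ WK WV E).submatrix σ id := by
  have hrows (W : Matrix (Fin d) (Fin d) ℝ) : E.submatrix σ id * W = (E * W).submatrix σ id :=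
    (submatrix_mul E W σ id id Function.bijective_id).symm
  have hscores : E.submatrix σ id * WQ * (E.submatrix σ id * WK)ᵀ =
      (E * WQ * (E * WK)ᵀ).submatrix σ σ := by
    rw [hrows, hrows, transpose_submatrix]
    exact (submatrix_mul _ _ σ id σ Function.bijective_id).symm
  unfold maskedAttention
  rw [hscores, hrows, ← submatrix_mul_equiv _ _ _ σ]
  exact congrArg (· * _) (maskedSoftmaxRows_submatrix σ M (M ⊙ (E * WQ * (E * WK)ᵀ)))

theorem stmt_3_general {n d : ℕ} (M : Matrix (Fin n) (Fin n) ℝ)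
    (WQ WK WV : Matrix (Fin d) (Fin d) ℝ)
    (E : Matrix (Fin n) (Fin d) ℝ) (P : Matrix (Fin n) (Fin n) ℝ)
    (hP : ∃ σ : Equiv.Perm (Fin n), P = σ.permMatrix ℝ)
    (hPM : P * M * Pᵀ = M) :
    maskedAttention M WQ WK WV (P * E) = P * maskedAttention M WQ WK WV E := by
  obtain ⟨σ, rfl⟩ := hP
  have hMσ : M.submatrix σ σ = M := (permMatrix_mul_mul_transpose σ M).symm.trans hPM
  rw [PEquiv.toMatrix_toPEquiv_mul, PEquiv.toMatrix_toPEquiv_mul, ← maskedAttention_submatrix,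
    hMσ]

/-- Masked self-attention is equivariant to any permutation preserving the mask:
if `M` is a 0-1 mask with a `1` in every row and `P M Pᵀ = M` for a permutation
matrix `P`, then `f (P E) = P f(E)`. -/
theorem stmt_3 {n d : ℕ} (M : Matrix (Fin n) (Fin n) ℝ)
    (hM01 : ∀ i j, M i j = 0 ∨ M i j = 1)
    (hMrow : ∀ i, ∃ j, M i j = 1)
    (WQ WK WV : Matrix (Fin d) (Fin d) ℝ)
    (E : Matrix (Fin n) (Fin d) ℝ) (P : Matrix (Fin n) (Fin n) ℝ)
    (hP : ∃ σ : Equiv.Perm (Fin n), P = σ.permMatrix ℝ)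
    (hPM : P * M * Pᵀ = M) :
    maskedAttention M WQ WK WV (P * E) = P * maskedAttention M WQ WK WV E :=
  stmt_3_general M WQ WK WV E P hP hPM
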